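/- arXiv:2412.08815 — 2 statements merged into one kernel-verified Lean document; each statement's English description precedes it below -/
import Mathlib

section
/- For every positive integer n with n ≡ 1 (mod 4), the discriminant of the polynomial p_n(X) = 1 + X + X² + ⋯ + Xⁿ is the square of a rational number. -/
/-! Over `ℂ`, the product `∏_{i<j} (α_i - α_j)^2` over the roots of a monic `p` of degree `n`
equals `(-1)^{n(n-1)/2} ∏_i p'(α_i)`. For `p = 1 + X + ⋯ + Xⁿ`, differentiating
`p (X - 1) = X^{n+1} - 1` gives `p'(α) (α - 1) = (n + 1) αⁿ` at every root `α`. Since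
`∏ α = (-1)ⁿ` and `∏ (α - 1) = (-1)ⁿ p(1) = (-1)ⁿ (n + 1)`, the product of the `p'(α)` is
`(n + 1)^{n-1}`, so `Δ(p) = (-1)^{n(n-1)/2} (n + 1)^{n-1}`, a square when `n ≡ 1 (mod 4)`. -/

open Polynomial

/-- The product `∏_{i<j} (α_i - α_j)^2` over a list of complex numbers. -/
noncomputable def pairProd (l : List ℂ) : ℂ :=
  ∏ i : Fin l.length, ∏ j : Fin l.length,
    if (i : ℕ) < (j : ℕ) then (l.get i - l.get j) ^ 2 else 1

/-- The discriminant `Δ(f) = a_n^{2n-2} ∏_{i<j} (α_i - α_j)^2` of a rational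
polynomial, where `α_1, …, α_n` are its complex zeros with multiplicity. -/
noncomputable def polyDisc (f : ℚ[X]) : ℂ :=
  (f.leadingCoeff : ℂ) ^ (2 * (f.natDegree : ℤ) - 2) * pairProd ((f.aroots ℂ).toList)

open Finset

theorem Fin.prod_prod_Ioi_sub_sq {R : Type*} [CommRing R] {n : ℕ} (v : Fin n → R) :
    ∏ i, ∏ j ∈ Ioi i, (v i - v j) ^ 2 =
      (-1) ^ (n * (n - 1) / 2) * ∏ i, ∏ j ∈ {i}ᶜ, (v i - v j) := by
  have hsign : ∏ i : Fin n, ∏ _j ∈ Ioi i, (-1 : R) = (-1) ^ (n * (n - 1) / 2) := by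
    rw [prod_congr rfl fun i _ => by rw [Finset.prod_const, Fin.card_Ioi], prod_pow_eq_pow_sum,
      Fin.sum_univ_eq_sum_range (fun i => n - 1 - i), sum_range_reflect (fun i => i),
      sum_range_id]
  rw [← hsign, ← prod_prod_Ioi_mul_eq_prod_prod_off_diag (fun i j => v j - v i),
    ← prod_mul_distrib]
  refine prod_congr rfl fun i _ => ?_
  rw [← prod_mul_distrib]
  exact prod_congr rfl fun j _ => by ring

theorem pairProd_eq_prod_prod_Ioi (l : List ℂ) :
    pairProd l = ∏ i, ∏ j ∈ Ioi i, (l.get i - l.get j) ^ 2 := by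
  simp only [pairProd, prod_ite, prod_const_one, mul_one, Fin.val_fin_lt, filter_lt_eq_Ioi]

theorem eval_derivative_prod_X_sub_C {R ι : Type*} [CommRing R] [Fintype ι] [DecidableEq ι]
    (v : ι → R) (i : ι) :
    eval (v i) (derivative (∏ k, (X - C (v k)))) = ∏ j ∈ {i}ᶜ, (v i - v j) := by
  rw [← Lagrange.nodal_eq, Lagrange.eval_nodal_derivative_eval_node_eq (mem_univ i),
    Lagrange.eval_nodal, compl_singleton]

theorem pairProd_roots_toList {p : ℂ[X]} (hp : p.Monic) :
    pairProd p.roots.toList =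
      (-1) ^ (p.natDegree * (p.natDegree - 1) / 2) *
        (p.roots.map fun r => eval r (derivative p)).prod := by
  set l := p.roots.toList
  have hl : (l : Multiset ℂ) = p.roots := Multiset.coe_toList _
  have hlen : l.length = p.natDegree := by
    rw [← Multiset.coe_card, hl, (IsAlgClosed.splits p).natDegree_eq_card_roots]
  have hprod : ∏ k, (X - C (l.get k)) = p := by
    rw [(IsAlgClosed.splits p).eq_prod_roots_of_monic hp, ← hl, Multiset.map_coe,
      Multiset.prod_coe, ← Fin.prod_univ_fun_getElem]
    rfl
  rw [pairProd_eq_prod_prod_Ioi, Fin.prod_prod_Ioi_sub_sq, ← hlen, ← hl, Multiset.map_coe,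
    Multiset.prod_coe, ← Fin.prod_univ_fun_getElem]
  congr 1
  refine prod_congr rfl fun i _ => ?_
  rw [← eval_derivative_prod_X_sub_C, hprod]
  rfl

theorem natDegree_geom_sum_X {R : Type*} [CommRing R] [Nontrivial R] (n : ℕ) :
    (∑ i ∈ range (n + 1), (X : R[X]) ^ i).natDegree = n := by
  have h := congrArg natDegree (mul_geom_sum (X : R[X]) (n + 1))
  rwa [← C_1, natDegree_X_pow_sub_C,
    (monic_X_sub_C 1).natDegree_mul (monic_geom_sum_X n.succ_ne_zero), natDegree_X_sub_C,
    add_comm, Nat.add_right_cancel_iff] at h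

theorem eval_derivative_geom_sum_X_mul_sub_one {R : Type*} [CommRing R] (n : ℕ) {r : R}
    (hr : (∑ i ∈ range (n + 1), (X : R[X]) ^ i).IsRoot r) :
    eval r (derivative (∑ i ∈ range (n + 1), (X : R[X]) ^ i)) * (r - 1) = (n + 1) * r ^ n := by
  have h := congrArg (fun q => eval r (derivative q)) (geom_sum_mul (X : R[X]) (n + 1))
  simp only [derivative_mul, derivative_sub, derivative_X, derivative_one, derivative_X_pow,
    eval_add, eval_mul, eval_sub, eval_X, eval_one, eval_pow, hr.eq_zero] at h
  simpa using h

section GeomSum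

variable {K : Type*} [Field K] {n : ℕ}

theorem prod_roots_geom_sum_X (hs : (∑ i ∈ range (n + 1), (X : K[X]) ^ i).Splits) :
    (∑ i ∈ range (n + 1), (X : K[X]) ^ i).roots.prod = (-1) ^ n := by
  have h := hs.coeff_zero_eq_prod_roots_of_monic (monic_geom_sum_X n.succ_ne_zero)
  rw [natDegree_geom_sum_X, coeff_zero_eq_eval_zero, eval_geom_sum, sum_range_succ',
    pow_zero, sum_eq_zero fun i _ => zero_pow i.succ_ne_zero, zero_add] at h
  calc _ = ((-1) ^ n * (-1) ^ n : K) * (∑ i ∈ range (n + 1), (X : K[X]) ^ i).roots.prod := by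
        rw [← mul_pow, neg_one_mul, neg_neg, one_pow, one_mul]
    _ = (-1) ^ n := by rw [mul_assoc, ← h, mul_one]

theorem prod_roots_sub_one_geom_sum_X (hs : (∑ i ∈ range (n + 1), (X : K[X]) ^ i).Splits) :
    ((∑ i ∈ range (n + 1), (X : K[X]) ^ i).roots.map (· - 1)).prod =
      (-1 : K) ^ n * (n + 1) := by
  have h := hs.eval_eq_prod_roots_of_monic (monic_geom_sum_X n.succ_ne_zero) 1
  rw [eval_geom_sum] at h
  simp only [one_pow, sum_const, card_range, nsmul_eq_mul, mul_one] at h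
  rw [show (· - 1 : K → K) = Neg.neg ∘ (1 - ·) by funext; simp, ← Multiset.map_map,
    Multiset.prod_map_neg, Multiset.card_map, ← hs.natDegree_eq_card_roots, natDegree_geom_sum_X,
    ← h, Nat.cast_succ]

theorem prod_roots_eval_derivative_geom_sum_X [CharZero K]
    (hs : (∑ i ∈ range (n + 1), (X : K[X]) ^ i).Splits) :
    ((∑ i ∈ range (n + 1), (X : K[X]) ^ i).roots.map
      fun r => eval r (derivative (∑ i ∈ range (n + 1), (X : K[X]) ^ i))).prod =
        (n + 1 : K) ^ (n - 1) := by
  have hmul := congrArg Multiset.prod <| Multiset.map_congr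
    (rfl : (∑ i ∈ range (n + 1), (X : K[X]) ^ i).roots = _) fun r hr =>
      eval_derivative_geom_sum_X_mul_sub_one n (isRoot_of_mem_roots hr)
  rw [Multiset.prod_map_mul, Multiset.prod_map_mul, Multiset.map_const', Multiset.prod_replicate,
    Multiset.prod_map_pow, ← hs.natDegree_eq_card_roots, natDegree_geom_sum_X,
    Multiset.map_id', prod_roots_sub_one_geom_sum_X hs, prod_roots_geom_sum_X hs] at hmul
  have hsign : ((-1 : K) ^ n) ^ n = (-1) ^ n := by
    obtain h | h := n.even_or_odd <;> simp [h.neg_one_pow]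
  have hc : (-1 : K) ^ n * (n + 1) ≠ 0 :=
    mul_ne_zero (pow_ne_zero _ (neg_ne_zero.2 one_ne_zero)) (Nat.cast_add_one_ne_zero n)
  refine mul_right_cancel₀ hc ?_
  rw [hmul, hsign]
  cases n with
  | zero => simp
  | succ m => rw [Nat.add_sub_cancel, pow_succ]; ring

end GeomSum

theorem polyDisc_geom_sum_X (n : ℕ) :
    polyDisc (∑ i ∈ range (n + 1), (X : ℚ[X]) ^ i) =
      (-1) ^ (n * (n - 1) / 2) * ((n : ℂ) + 1) ^ (n - 1) := by
  have hmap : (∑ i ∈ range (n + 1), (X : ℚ[X]) ^ i).map (algebraMap ℚ ℂ) =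
      ∑ i ∈ range (n + 1), (X : ℂ[X]) ^ i := by
    simp only [Polynomial.map_sum, Polynomial.map_pow, map_X]
  rw [polyDisc, (monic_geom_sum_X n.succ_ne_zero).leadingCoeff, Rat.cast_one, one_zpow, one_mul,
    aroots_def, hmap, pairProd_roots_toList (monic_geom_sum_X n.succ_ne_zero),
    natDegree_geom_sum_X, prod_roots_eval_derivative_geom_sum_X (IsAlgClosed.splits _)]

theorem disc_geom_sum_is_square_general (n : ℕ) (hmod : n % 4 = 1) :
    ∃ q : ℚ, polyDisc (∑ i ∈ Finset.range (n + 1), (X : ℚ[X]) ^ i) = (q : ℂ) ^ 2 := by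
  obtain ⟨k, rfl⟩ : ∃ k, n = 4 * k + 1 := ⟨n / 4, by omega⟩
  have hsign : (4 * k + 1) * (4 * k + 1 - 1) / 2 = 2 * (k * (4 * k + 1)) := by
    rw [Nat.add_sub_cancel, show (4 * k + 1) * (4 * k) = 2 * (2 * (k * (4 * k + 1))) by ring,
      Nat.mul_div_cancel_left _ two_pos]
  refine ⟨((4 * k + 1 : ℕ) + 1 : ℚ) ^ (2 * k), ?_⟩
  rw [polyDisc_geom_sum_X, hsign, pow_mul, neg_one_sq, one_pow, one_mul, Nat.add_sub_cancel]
  push_cast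
  ring

/-- For `n ≡ 1 (mod 4)`, the polynomial `p_n = 1 + X + ⋯ + Xⁿ` has square discriminant. -/
theorem disc_geom_sum_is_square (n : ℕ) (hn : 0 < n) (hmod : n % 4 = 1) :
    ∃ q : ℚ, polyDisc (∑ i ∈ Finset.range (n + 1), (X : ℚ[X]) ^ i) = (q : ℂ) ^ 2 :=
  disc_geom_sum_is_square_general n hmod
end

section
/- Let f ∈ ℚ[X] be a monic nonconstant polynomial of even degree n, let k be an odd positive integer, let g(X) = f(X^k), and let a_0 = g(0). Then Δ(f)·Δ(g) = (−1)^{n²k(k−1)/2} · k^{kn} · a_0^{k−1} · Δ(f)^{k+1}. -/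
/-!
For monic `f` with complex roots `αᵢ`, the product `∏_{i<j} (αᵢ - αⱼ)²` equals
`(-1)^(n(n-1)/2) ∏ᵢ f'(αᵢ)`. The roots of `g = f(X^k)` are the `k`-th roots `β` of the `αᵢ`, and
`g'(β) = k β^(k-1) f'(β^k)`. For odd `k` the `k`-th roots of `α` multiply to `α`, so
`∏_β g'(β) = k^(kn) (∏ αᵢ)^(k-1) (∏ f'(αᵢ))^k`, and `∏ αᵢ = f(0) = a₀` because `n` is even.
When `n` is even and `k` is odd all the signs cancel.
-/

open Polynomial

section prodDerivAtRoots

variable {R : Type*} [CommRing R]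

noncomputable def prodDerivAtRoots (s : Multiset R) : R :=
  (s.map fun r => ((s.map fun a => X - C a).prod).derivative.eval r).prod

theorem prodDerivAtRoots_zero : prodDerivAtRoots (0 : Multiset R) = 1 := by
  simp [prodDerivAtRoots]

theorem prodDerivAtRoots_cons (a : R) (s : Multiset R) :
    prodDerivAtRoots (a ::ₘ s) =
      (-1) ^ Multiset.card s * (s.map fun b => a - b).prod ^ 2 * prodDerivAtRoots s := by
  set Q := (s.map fun a => X - C a).prod
  have hQ : ∀ x, Q.eval x = (s.map fun b => x - b).prod := by
    simp [Q, eval_multiset_prod]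
  have h_eval_root : ∀ r ∈ s,
      ((X - C a) * Q).derivative.eval r = -1 * ((a - r) * Q.derivative.eval r) := by
    intro r hr
    have hQr : Q.eval r = 0 := by
      rw [hQ]
      exact Multiset.prod_eq_zero (Multiset.mem_map.2 ⟨r, hr, sub_self r⟩)
    simp only [derivative_mul, derivative_sub, derivative_X, derivative_C, sub_zero, one_mul,
      eval_add, hQr, eval_mul, eval_sub, eval_X, eval_C, zero_add]
    ring
  simp only [prodDerivAtRoots, Multiset.map_cons, Multiset.prod_cons]
  rw [Multiset.map_congr rfl h_eval_root, Multiset.prod_map_mul, Multiset.prod_map_mul]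
  simp only [derivative_mul, derivative_sub, derivative_X, derivative_C, sub_zero, one_mul,
    eval_add, hQ, eval_mul, eval_sub, eval_X, eval_C, sub_self, zero_mul, add_zero,
    Multiset.map_const', Multiset.prod_replicate, Q]
  ring

theorem prodDerivAtRoots_roots [IsDomain R] {p : R[X]} (hp : p.Monic) (hsplit : p.Splits) :
    prodDerivAtRoots p.roots = (p.roots.map fun r => p.derivative.eval r).prod := by
  rw [prodDerivAtRoots, ← hsplit.eq_prod_roots_of_monic hp]

theorem eval_derivative_comp_X_pow (p : R[X]) (k : ℕ) (x : R) :
    (p.comp (X ^ k)).derivative.eval x = k * x ^ (k - 1) * p.derivative.eval (x ^ k) := by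
  simp [derivative_comp, derivative_X_pow]

end prodDerivAtRoots

theorem pairProd_cons (a : ℂ) (l : List ℂ) :
    pairProd (a :: l) = ((l : Multiset ℂ).map fun b => (a - b) ^ 2).prod * pairProd l := by
  simp only [pairProd, List.length_cons, Fin.prod_univ_succ, Fin.val_zero, Fin.val_succ,
    if_false, one_mul, Nat.zero_lt_succ, if_true, Nat.not_lt_zero, Nat.succ_lt_succ_iff,
    List.get_cons_zero, Multiset.map_coe, Multiset.prod_coe]
  congr 1
  exact Fin.prod_univ_fun_getElem l fun b => (a - b) ^ 2

theorem pairProd_eq_neg_one_pow_mul_prodDerivAtRoots (l : List ℂ) :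
    pairProd l = (-1) ^ l.length.choose 2 * prodDerivAtRoots (l : Multiset ℂ) := by
  induction l with
  | nil => simp [pairProd, prodDerivAtRoots_zero]
  | cons a l ih =>
    rw [pairProd_cons, ih, ← Multiset.cons_coe, prodDerivAtRoots_cons, Multiset.prod_map_pow,
      List.length_cons, Nat.choose_succ_succ', Nat.choose_one_right, Multiset.coe_card, pow_add]
    ring_nf
    simp [pow_mul']

section IsAlgClosed

variable {K : Type*} [Field K] [IsAlgClosed K] {k : ℕ}

theorem IsAlgClosed.card_nthRoots (α : K) : Multiset.card (nthRoots k α) = k := by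
  rw [nthRoots, splits_iff_card_roots.1 (IsAlgClosed.splits _), natDegree_X_pow_sub_C]

theorem IsAlgClosed.prod_nthRoots (hk : 0 < k) (α : K) :
    (nthRoots k α).prod = (-1) ^ (k + 1) * α := by
  have h := (IsAlgClosed.splits (X ^ k - C α)).coeff_zero_eq_prod_roots_of_monic
    (monic_X_pow_sub_C α hk.ne')
  rw [natDegree_X_pow_sub_C, ← nthRoots, coeff_sub, coeff_C_zero, coeff_X_pow, if_neg hk.ne,
    zero_sub] at h
  have hsq : ((-1 : K) ^ k) ^ 2 = 1 := by rw [← pow_mul, pow_mul', neg_one_sq, one_pow]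
  linear_combination (-(-1 : K) ^ k) * h - (nthRoots k α).prod * hsq

theorem roots_comp_X_pow (hk : 0 < k) (p : K[X]) :
    (p.comp (X ^ k)).roots = p.roots.bind (nthRoots k) := by
  rcases eq_or_ne p 0 with rfl | hp
  · simp
  conv_lhs => rw [(IsAlgClosed.splits p).eq_prod_roots]
  rw [mul_comp, C_comp, roots_C_mul _ (leadingCoeff_ne_zero.2 hp), multiset_prod_comp,
    roots_multiset_prod, Multiset.bind_map, Multiset.bind_map]
  · simp only [sub_comp, X_comp, C_comp]
    rfl
  · simp [X_pow_sub_C_ne_zero hk]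

theorem prodDerivAtRoots_roots_comp_X_pow {p : K[X]} (hp : p.Monic) (hk : Odd k) :
    prodDerivAtRoots (p.comp (X ^ k)).roots =
      (k : K) ^ (k * p.natDegree) * p.roots.prod ^ (k - 1) * prodDerivAtRoots p.roots ^ k := by
  have hk0 := hk.pos
  have hpk : (p.comp (X ^ k)).Monic := hp.comp (monic_X_pow k) (by simp [hk0.ne'])
  have h_fiber : ∀ α ∈ p.roots, ((nthRoots k α).map fun β =>
      (k : K) * β ^ (k - 1) * p.derivative.eval (β ^ k)).prod =
      (k : K) ^ k * α ^ (k - 1) * p.derivative.eval α ^ k := by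
    intro α _
    rw [Multiset.map_congr rfl fun β hβ => by rw [(mem_nthRoots hk0).1 hβ],
      Multiset.prod_map_mul, Multiset.prod_map_mul, Multiset.map_const', Multiset.prod_replicate,
      Multiset.prod_map_pow, Multiset.map_const', Multiset.prod_replicate,
      IsAlgClosed.card_nthRoots, Multiset.map_id', IsAlgClosed.prod_nthRoots hk0,
      hk.add_one.neg_one_pow, one_mul]
  rw [prodDerivAtRoots_roots hpk (IsAlgClosed.splits _),
    prodDerivAtRoots_roots hp (IsAlgClosed.splits _), roots_comp_X_pow hk0, Multiset.map_bind,
    Multiset.prod_bind]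
  simp only [eval_derivative_comp_X_pow]
  rw [Multiset.map_congr rfl h_fiber, Multiset.prod_map_mul, Multiset.prod_map_mul,
    Multiset.map_const', Multiset.prod_replicate, Multiset.prod_map_pow, Multiset.prod_map_pow,
    ← splits_iff_card_roots.1 (IsAlgClosed.splits p), pow_mul, Multiset.map_id']

end IsAlgClosed

theorem Nat.even_choose_two_two_mul_iff (m : ℕ) : Even ((2 * m).choose 2) ↔ Even m := by
  have h : (2 * m).choose 2 + m = 2 * m ^ 2 := by
    rw [Nat.choose_two_right]
    rcases m with _ | m
    · simp
    · rw [show 2 * (m + 1) - 1 = 2 * m + 1 by omega,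
        show 2 * (m + 1) * (2 * m + 1) = 2 * ((m + 1) * (2 * m + 1)) by ring,
        Nat.mul_div_cancel_left _ two_pos]
      ring
  have : Even ((2 * m).choose 2 + m) := h ▸ even_two_mul _
  rwa [Nat.even_add] at this

theorem Nat.even_choose_two_add_choose_two_mul {n k : ℕ} (hn : Even n) (hk : Odd k) :
    Even (n.choose 2 + (n * k).choose 2) := by
  obtain ⟨m, rfl⟩ := hn
  rw [← two_mul, mul_assoc, Nat.even_add, Nat.even_choose_two_two_mul_iff,
    Nat.even_choose_two_two_mul_iff, Nat.even_mul]
  simp [Nat.not_even_iff_odd.2 hk]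

theorem Nat.even_sq_mul_div_two {n : ℕ} (hn : Even n) (a : ℕ) : Even (n ^ 2 * a / 2) := by
  obtain ⟨m, rfl⟩ := hn
  rw [show (m + m) ^ 2 * a = 2 * (2 * (m ^ 2 * a)) by ring, Nat.mul_div_cancel_left _ two_pos]
  exact even_two_mul _

theorem polyDisc_of_monic {f : ℚ[X]} (hf : f.Monic) :
    polyDisc f = (-1) ^ f.natDegree.choose 2 * prodDerivAtRoots (f.aroots ℂ) := by
  rw [polyDisc, hf.leadingCoeff, Rat.cast_one, one_zpow, one_mul,
    pairProd_eq_neg_one_pow_mul_prodDerivAtRoots, Multiset.coe_toList, Multiset.length_toList,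
    aroots_def, splits_iff_card_roots.1 (IsAlgClosed.splits _), hf.natDegree_map]

theorem disc_mul_disc_comp_pow_general (f : ℚ[X]) (hmonic : f.Monic) (heven : Even f.natDegree)
    (k : ℕ) (hodd : Odd k) :
    polyDisc f * polyDisc (f.comp (X ^ k)) =
      (-1) ^ (f.natDegree ^ 2 * k * (k - 1) / 2) * (k : ℂ) ^ (k * f.natDegree) *
        ((f.comp (X ^ k)).coeff 0 : ℂ) ^ (k - 1) * polyDisc f ^ (k + 1) := by
  set F := f.map (algebraMap ℚ ℂ) with hF_def
  have hF : F.Monic := hmonic.map _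
  have hg : (f.comp (X ^ k)).Monic := hmonic.comp (monic_X_pow k) (by simp [hodd.pos.ne'])
  have h_roots : (f.comp (X ^ k)).aroots ℂ = (F.comp (X ^ k)).roots := by
    rw [aroots_def, Polynomial.map_comp, Polynomial.map_pow, map_X]
  have h_coeff : ((f.comp (X ^ k)).coeff 0 : ℂ) = F.roots.prod := by
    rw [coeff_zero_eq_eval_zero, eval_comp, eval_pow, eval_X, zero_pow hodd.pos.ne',
      ← coeff_zero_eq_eval_zero, ← eq_ratCast (algebraMap ℚ ℂ), ← coeff_map,
      (IsAlgClosed.splits F).coeff_zero_eq_prod_roots_of_monic hF, hmonic.natDegree_map,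
      heven.neg_one_pow, one_mul]
  have h_sign : (-1 : ℂ) ^ f.natDegree.choose 2 * (-1) ^ (f.natDegree * k).choose 2 = 1 := by
    rw [← pow_add]
    exact (Nat.even_choose_two_add_choose_two_mul heven hodd).neg_one_pow
  have h_sign_pow : ((-1 : ℂ) ^ f.natDegree.choose 2) ^ (k + 1) = 1 := by
    rw [← pow_mul]
    exact (hodd.add_one.mul_left _).neg_one_pow
  rw [polyDisc_of_monic hmonic, polyDisc_of_monic hg, h_roots, aroots_def, ← hF_def,
    prodDerivAtRoots_roots_comp_X_pow hF hodd, h_coeff, hmonic.natDegree_map, natDegree_comp,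
    natDegree_X_pow, mul_assoc _ k, (Nat.even_sq_mul_div_two heven _).neg_one_pow]
  linear_combination (↑k ^ (k * f.natDegree) * F.roots.prod ^ (k - 1) *
    prodDerivAtRoots F.roots ^ (k + 1)) * (h_sign - h_sign_pow)

/-- For `f` monic nonconstant of even degree `n`, `k` odd, `g = f(X^k)`, `a₀ = g(0)`:
`Δ(f)·Δ(g) = (-1)^(n²k(k-1)/2) · k^(kn) · a₀^(k-1) · Δ(f)^(k+1)`. -/
theorem disc_mul_disc_comp_pow (f : ℚ[X]) (hmonic : f.Monic)
    (hnc : 0 < f.natDegree) (heven : Even f.natDegree)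
    (k : ℕ) (hk : 0 < k) (hodd : Odd k) :
    polyDisc f * polyDisc (f.comp (X ^ k)) =
      (-1) ^ (f.natDegree ^ 2 * k * (k - 1) / 2) * (k : ℂ) ^ (k * f.natDegree) *
        ((f.comp (X ^ k)).coeff 0 : ℂ) ^ (k - 1) * polyDisc f ^ (k + 1) :=
  disc_mul_disc_comp_pow_general f hmonic heven k hodd
end
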